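/- Let Ω be a finite set and let G ≤ Sym(Ω) be an abelian permutation group. Then G admits an asymmetric 2-coloring: there exists a subset Δ ⊆ Ω whose setwise stabilizer G_Δ = {g ∈ G : g(Δ) = Δ} is the trivial group. In fact, any transversal of the orbits of G (a subset meeting each G-orbit in exactly one point) is such a subset. -/

import Mathlib

/-- The setwise stabilizer of `Δ` in the permutation group `G ≤ Sym(Ω)`:
the subgroup `{g ∈ G : g(Δ) = Δ}`. -/
def setwiseStabilizer {Ω : Type*} (G : Subgroup (Equiv.Perm Ω)) (Δ : Set Ω) :
    Subgroup ↥G where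
  carrier := {g : ↥G | (g : Equiv.Perm Ω) '' Δ = Δ}
  one_mem' := by simp
  mul_mem' := by
    intro a b ha hb
    simp only [Set.mem_setOf_eq] at *
    rw [Subgroup.coe_mul, Equiv.Perm.coe_mul, Set.image_comp, hb, ha]
  inv_mem' := by
    intro a ha
    simp only [Set.mem_setOf_eq] at *
    conv_lhs => rw [← ha]
    rw [← Set.image_comp]
    simp

/-- **Abelian permutation groups admit asymmetric 2-colorings.**
Let `G ≤ Sym(Ω)` be an abelian permutation group on a finite set `Ω`.  Then there is a
subset `Δ ⊆ Ω` whose setwise stabilizer `G_Δ` is trivial.  In fact, every transversal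
of the orbits of `G` (a subset meeting each `G`-orbit in exactly one point) is such a
subset. -/
theorem abelian_asymmetric_two_coloring {Ω : Type*} [Fintype Ω]
    (G : Subgroup (Equiv.Perm Ω)) (habelian : ∀ a b : ↥G, a * b = b * a) :
    (∃ Δ : Set Ω, setwiseStabilizer G Δ = ⊥) ∧
    (∀ Δ : Set Ω,
      (∀ x : Ω, ∃! y : Ω, y ∈ Δ ∧ y ∈ MulAction.orbit ↥G x) →
      setwiseStabilizer G Δ = ⊥) := by
  have key : ∀ Δ : Set Ω,
      (∀ x : Ω, ∃! y : Ω, y ∈ Δ ∧ y ∈ MulAction.orbit ↥G x) →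
      setwiseStabilizer G Δ = ⊥ := by
    intro Δ hΔ
    rw [eq_bot_iff]
    intro g hg
    have hg' : (g : Equiv.Perm Ω) '' Δ = Δ := hg
    simp only [Subgroup.mem_bot]
    have hfix : ∀ x : Ω, g • x = x := by
      intro x
      obtain ⟨y, ⟨hyΔ, h, hy'⟩, huniq⟩ := hΔ x
      have hy : h • x = y := hy'
      have hgy : g • y = y := by
        apply huniq
        refine ⟨?_, g * h, show (g * h) • x = g • y by rw [mul_smul, hy]⟩
        rw [← hg']
        exact ⟨y, hyΔ, rfl⟩
      have hx : x = h⁻¹ • y := by rw [← hy, inv_smul_smul]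
      calc g • x = g • h⁻¹ • y := by rw [hx]
        _ = (g * h⁻¹) • y := by rw [mul_smul]
        _ = (h⁻¹ * g) • y := by rw [habelian]
        _ = h⁻¹ • (g • y) := by rw [mul_smul]
        _ = h⁻¹ • y := by rw [hgy]
        _ = x := hx.symm
    refine Subtype.ext (Equiv.ext fun x => ?_)
    simpa [Subgroup.smul_def, Equiv.Perm.smul_def] using hfix x
  refine ⟨?_, key⟩
  refine ⟨Set.range (Quotient.out (s := MulAction.orbitRel ↥G Ω)), key _ ?_⟩
  intro x
  refine ⟨(Quotient.mk (MulAction.orbitRel ↥G Ω) x).out,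
    ⟨⟨_, rfl⟩, MulAction.orbitRel_apply.mp (Quotient.exact (Quotient.out_eq _))⟩, ?_⟩
  rintro z ⟨⟨q, rfl⟩, hz⟩
  congr 1
  rw [← Quotient.out_eq q]
  exact Quotient.sound (MulAction.orbitRel_apply.mpr hz)
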